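/- arXiv:2501.12729 — 5 statements merged into one kernel-verified Lean document; each statement's English description precedes it below -/
import Mathlib

section
/- Define μ(n) = min{h ∈ ℕ : α(n+h) ≤ h}, where α(m) is the number of ones in the binary expansion of m. Then for every n ∈ ℕ and k ≥ 1, one has μ(n) = k if and only if there exists a unique sequence of integers d₁ > d₂ > ⋯ > d_{k-1} ≥ d_k > 0 such that n = Σ_{j=1}^{k} (2^{d_j} − 1). -/
/-- Number of ones in the binary expansion. -/
def alpha (n : ℕ) : ℕ := (Nat.digits 2 n).sum

/-- μ(n) = min {h : α(n+h) ≤ h}. -/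
noncomputable def mu (n : ℕ) : ℕ := sInf {h : ℕ | alpha (n + h) ≤ h}

/-- Admissibility: d₁ > d₂ > ⋯ > d_{k-1} ≥ d_k > 0 (0-indexed). -/
def AdmissibleSeq (k : ℕ) (d : Fin k → ℕ) : Prop :=
  (∀ i, 0 < d i) ∧
  ∀ (i : ℕ) (h1 : i + 1 < k),
    (i + 2 < k → d ⟨i + 1, h1⟩ < d ⟨i, by omega⟩) ∧
    d ⟨i + 1, h1⟩ ≤ d ⟨i, by omega⟩

/-!
Both sides satisfy the same recursion, obtained by splitting off the largest Mersenne number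
not exceeding `n`: write `n = 2 ^ D - 1 + m` with `D ≥ 1` and `m < 2 ^ D`.
For `1 ≤ h ≤ 2 ^ D - m` we have `α(n + h) = 1 + α(m + (h - 1))`, and `μ(m) ≤ 2 ^ D - m`
since `α(2 ^ D) = 1`; hence `μ(n) = μ(m) + 1`.
On the other side, `(D, e₁, …, eₖ)` is admissible iff `e` is admissible and
`∑ (2 ^ eⱼ - 1) < 2 ^ D`; this bound forces `D = log₂ (n + 1)`, which gives uniqueness.
-/

lemma log_two_pow_add {s : ℕ} (D : ℕ) (hs : s < 2 ^ D) : Nat.log 2 (2 ^ D + s) = D :=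
  Nat.log_eq_of_pow_le_of_lt_pow (by omega) (by rw [pow_succ]; omega)

lemma two_pow_sub_one_add_lt_two_pow_iff {E D s : ℕ} (hs : s < 2 ^ E) :
    2 ^ E - 1 + s < 2 ^ D ↔ E ≤ D ∧ (0 < s → E < D) := by
  have hE := Nat.one_le_two_pow (n := E)
  constructor
  · intro h
    exact ⟨(Nat.pow_le_pow_iff_right one_lt_two).1 (by omega),
      fun hs0 => (Nat.pow_lt_pow_iff_right one_lt_two).1 (by omega)⟩
  · rintro ⟨hle, hlt⟩
    rcases Nat.eq_zero_or_pos s with rfl | hs0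
    · have := Nat.pow_le_pow_right two_pos hle
      omega
    · have := Nat.pow_le_pow_right two_pos (hlt hs0)
      rw [pow_succ] at this
      omega

lemma exists_eq_two_pow_sub_one_add {n : ℕ} (hn : n ≠ 0) :
    ∃ D m, 0 < D ∧ m < 2 ^ D ∧ n = 2 ^ D - 1 + m := by
  have hlow := Nat.pow_log_le_self 2 n.add_one_ne_zero
  have hhigh := Nat.lt_pow_succ_log_self one_lt_two (n + 1)
  rw [pow_succ] at hhigh
  exact ⟨Nat.log 2 (n + 1), n + 1 - 2 ^ Nat.log 2 (n + 1),
    Nat.log_pos one_lt_two (by omega), by omega, by omega⟩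

lemma alpha_le_self (n : ℕ) : alpha n ≤ n := Nat.digit_sum_le 2 n

lemma alpha_eq_zero_iff {n : ℕ} : alpha n = 0 ↔ n = 0 := by
  refine ⟨fun h => ?_, fun h => by simp [h, alpha]⟩
  by_contra hn
  have hlast := Nat.getLast_digit_ne_zero 2 hn
  have := List.le_sum_of_mem (List.getLast_mem (Nat.digits_ne_nil_iff_ne_zero (b := 2) |>.mpr hn))
  exact hlast (by unfold alpha at h; omega)

lemma alpha_two_mul (n : ℕ) : alpha (2 * n) = alpha n := by
  rcases Nat.eq_zero_or_pos n with rfl | hn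
  · rfl
  · simpa [alpha] using congrArg List.sum (Nat.digits_base_pow_mul (k := 1) one_lt_two hn)

lemma alpha_add_two_pow {x : ℕ} (D : ℕ) (hx : x < 2 ^ D) : alpha (x + 2 ^ D) = alpha x + 1 := by
  have hlen : (Nat.digits 2 x).length ≤ D := (Nat.digits_length_le_iff one_lt_two x).2 hx
  have h := Nat.digits_append_zeroes_append_digits (k := D - (Nat.digits 2 x).length)
    (m := 1) (n := x) one_lt_two one_pos
  rw [Nat.add_sub_cancel' hlen, mul_one] at h
  rw [alpha, alpha, ← h]
  simp

lemma alpha_two_pow (D : ℕ) : alpha (2 ^ D) = 1 := by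
  simpa [alpha] using alpha_add_two_pow D (Nat.two_pow_pos D)

lemma mu_spec (n : ℕ) : alpha (n + mu n) ≤ mu n := by
  refine Nat.sInf_mem (s := {h | alpha (n + h) ≤ h}) ⟨n, ?_⟩
  simpa [← two_mul, alpha_two_mul] using alpha_le_self n

lemma mu_le {n h : ℕ} (hh : alpha (n + h) ≤ h) : mu n ≤ h := Nat.sInf_le hh

lemma mu_eq_zero_iff {n : ℕ} : mu n = 0 ↔ n = 0 := by
  refine ⟨fun h => ?_, fun h => ?_⟩
  · simpa [h, alpha_eq_zero_iff] using mu_spec n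
  · exact Nat.le_zero.mp (mu_le (by simp [h, alpha]))

lemma mu_le_two_pow_sub {m : ℕ} (D : ℕ) (hm : m < 2 ^ D) : mu m ≤ 2 ^ D - m :=
  mu_le (by rw [Nat.add_sub_cancel' hm.le, alpha_two_pow]; omega)

lemma mu_two_pow_sub_one_add {m D : ℕ} (hD : 0 < D) (hm : m < 2 ^ D) :
    mu (2 ^ D - 1 + m) = mu m + 1 := by
  have hpow : 2 ≤ 2 ^ D := Nat.le_self_pow hD.ne' 2
  have hmu_m := mu_le_two_pow_sub D hm
  apply le_antisymm
  · apply mu_le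
    rcases (show m + mu m < 2 ^ D ∨ m + mu m = 2 ^ D by omega) with hlt | heq
    · rw [show 2 ^ D - 1 + m + (mu m + 1) = m + mu m + 2 ^ D by omega, alpha_add_two_pow D hlt]
      linarith [mu_spec m]
    · rw [show 2 ^ D - 1 + m + (mu m + 1) = 2 ^ (D + 1) by rw [pow_succ]; omega, alpha_two_pow]
      omega
  · set h := mu (2 ^ D - 1 + m)
    have hpos : 0 < h := Nat.pos_of_ne_zero (mu_eq_zero_iff.not.mpr (by omega))
    by_contra! hlt
    have hsmall : m + (h - 1) < 2 ^ D := by omega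
    have hspec := mu_spec (2 ^ D - 1 + m)
    rw [show 2 ^ D - 1 + m + h = m + (h - 1) + 2 ^ D by omega, alpha_add_two_pow D hsmall] at hspec
    have := mu_le (h := h - 1) (n := m) (by omega)
    omega

lemma admissibleSeq_zero (d : Fin 0 → ℕ) : AdmissibleSeq 0 d :=
  ⟨nofun, fun _ h => by omega⟩

lemma admissibleSeq_one_iff {D : ℕ} {e : Fin 0 → ℕ} :
    AdmissibleSeq 1 (Fin.cons D e) ↔ 0 < D := by
  simp [AdmissibleSeq, Fin.forall_fin_one]

lemma admissibleSeq_cons_cons_iff {k D E : ℕ} {f : Fin k → ℕ} :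
    AdmissibleSeq (k + 2) (Fin.cons D (Fin.cons E f)) ↔
      0 < D ∧ AdmissibleSeq (k + 1) (Fin.cons E f) ∧ E ≤ D ∧ (0 < k → E < D) := by
  simp only [AdmissibleSeq, Fin.forall_fin_succ (n := k + 1), Fin.cons_zero, Fin.cons_succ]
  constructor
  · rintro ⟨⟨hD, hpos⟩, hchain⟩
    have hhead := hchain 0 (by omega)
    refine ⟨hD, ⟨hpos, fun i hi => ?_⟩, hhead.2, fun hk => hhead.1 (by omega)⟩
    have hnext := hchain (i + 1) (by omega)
    exact ⟨fun h => hnext.1 (by omega), hnext.2⟩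
  · rintro ⟨hD, ⟨hpos, hchain⟩, hED, hk⟩
    refine ⟨⟨hD, hpos⟩, fun i hi => ?_⟩
    rcases i with _ | i
    · exact ⟨fun h => hk (by omega), hED⟩
    · have hnext := hchain i (by omega)
      exact ⟨fun h => hnext.1 (by omega), hnext.2⟩

lemma sum_two_pow_sub_one_pos_iff {k : ℕ} {e : Fin k → ℕ} (he : AdmissibleSeq k e) :
    0 < ∑ j, (2 ^ e j - 1) ↔ 0 < k := by
  refine ⟨fun h => Nat.pos_of_ne_zero ?_,
    fun hk => Finset.sum_pos (fun j _ => ?_) ⟨⟨0, hk⟩, Finset.mem_univ _⟩⟩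
  · rintro rfl
    simp at h
  · have := Nat.one_lt_two_pow (he.1 j).ne'
    omega

lemma sum_cons_two_pow_sub_one {k : ℕ} (D : ℕ) (e : Fin k → ℕ) :
    ∑ j, (2 ^ (Fin.cons D e : Fin (k + 1) → ℕ) j - 1) = 2 ^ D - 1 + ∑ j, (2 ^ e j - 1) := by
  simp [Fin.sum_univ_succ]

lemma admissibleSeq_cons_iff {k D : ℕ} {e : Fin k → ℕ} :
    AdmissibleSeq (k + 1) (Fin.cons D e) ↔
      0 < D ∧ AdmissibleSeq k e ∧ ∑ j, (2 ^ e j - 1) < 2 ^ D := by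
  induction k generalizing D with
  | zero => simp [admissibleSeq_one_iff, admissibleSeq_zero]
  | succ k ih =>
    cases e using Fin.consCases with
    | cons E f =>
      rw [admissibleSeq_cons_cons_iff, ih, sum_cons_two_pow_sub_one]
      constructor
      · rintro ⟨hD, ⟨hE, hf, hfE⟩, hED⟩
        refine ⟨hD, ⟨hE, hf, hfE⟩, (two_pow_sub_one_add_lt_two_pow_iff hfE).2 ?_⟩
        rwa [sum_two_pow_sub_one_pos_iff hf]
      · rintro ⟨hD, ⟨hE, hf, hfE⟩, hlt⟩
        refine ⟨hD, ⟨hE, hf, hfE⟩, ?_⟩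
        rwa [two_pow_sub_one_add_lt_two_pow_iff hfE, sum_two_pow_sub_one_pos_iff hf] at hlt

lemma mu_sum_of_admissibleSeq {k : ℕ} {d : Fin k → ℕ} (hd : AdmissibleSeq k d) :
    mu (∑ j, (2 ^ d j - 1)) = k := by
  induction k with
  | zero => simp [mu_eq_zero_iff]
  | succ k ih =>
    cases d using Fin.consCases with
    | cons D e =>
      obtain ⟨hD, he, hlt⟩ := admissibleSeq_cons_iff.1 hd
      rw [sum_cons_two_pow_sub_one, mu_two_pow_sub_one_add hD hlt, ih he]

lemma eq_of_admissibleSeq_of_sum_eq {k : ℕ} {d d' : Fin k → ℕ} (hd : AdmissibleSeq k d)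
    (hd' : AdmissibleSeq k d') (hsum : ∑ j, (2 ^ d j - 1) = ∑ j, (2 ^ d' j - 1)) : d = d' := by
  induction k with
  | zero => exact Subsingleton.elim d d'
  | succ k ih =>
    cases d using Fin.consCases with
    | cons D e =>
    cases d' using Fin.consCases with
    | cons D' e' =>
      obtain ⟨-, he, hlt⟩ := admissibleSeq_cons_iff.1 hd
      obtain ⟨-, he', hlt'⟩ := admissibleSeq_cons_iff.1 hd'
      rw [sum_cons_two_pow_sub_one, sum_cons_two_pow_sub_one] at hsum
      have h1 := Nat.one_le_two_pow (n := D)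
      have h1' := Nat.one_le_two_pow (n := D')
      have hDD : D = D' := by
        rw [← log_two_pow_add D hlt, ← log_two_pow_add D' hlt']
        congr 1
        omega
      subst hDD
      rw [ih he he' (by omega)]

lemma exists_admissibleSeq_of_mu_eq {n k : ℕ} (h : mu n = k) :
    ∃ d : Fin k → ℕ, AdmissibleSeq k d ∧ n = ∑ j, (2 ^ d j - 1) := by
  induction k generalizing n with
  | zero => exact ⟨Fin.elim0, admissibleSeq_zero _, by simp [mu_eq_zero_iff.1 h]⟩
  | succ k ih =>
    have hn : n ≠ 0 := by
      rintro rfl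
      simp [mu_eq_zero_iff.2] at h
    obtain ⟨D, m, hD, hm, rfl⟩ := exists_eq_two_pow_sub_one_add hn
    rw [mu_two_pow_sub_one_add hD hm] at h
    obtain ⟨e, he, rfl⟩ := ih (Nat.succ.inj h)
    exact ⟨Fin.cons D e, admissibleSeq_cons_iff.2 ⟨hD, he, hm⟩,
      (sum_cons_two_pow_sub_one D e).symm⟩

theorem mu_eq_iff_unique_admissible_seq_general (n k : ℕ) :
    mu n = k ↔
      ∃! d : Fin k → ℕ, AdmissibleSeq k d ∧ n = ∑ j, (2 ^ d j - 1) := by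
  constructor
  · intro h
    obtain ⟨d, hd, rfl⟩ := exists_admissibleSeq_of_mu_eq h
    exact ⟨d, ⟨hd, rfl⟩,
      fun d' ⟨hd', hsum⟩ => eq_of_admissibleSeq_of_sum_eq hd' hd hsum.symm⟩
  · rintro ⟨d, ⟨hd, rfl⟩, -⟩
    exact mu_sum_of_admissibleSeq hd

theorem mu_eq_iff_unique_admissible_seq (n k : ℕ) (hk : 1 ≤ k) :
    mu n = k ↔
      ∃! d : Fin k → ℕ, AdmissibleSeq k d ∧ n = ∑ j, (2 ^ d j - 1) :=
  mu_eq_iff_unique_admissible_seq_general n k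
end

section
/- Let n be a positive integer that is not a power of 2, and let b = 2^k be the largest power of 2 with b < n, a = n − b. Then a < 2b, and in the Adem relation Sqᵃ Sqᵇ = Σ_{c=0}^{⌊a/2⌋} C(b−c−1, a−2c) Sq^{a+b−c} Sq^c (coefficients mod 2), the coefficient with c = 0, namely C(b−1, a) mod 2, equals 1. Consequently Sqⁿ can be written as a sum of composites Sqⁱ Sqʲ with 0 < i, j < n. -/
lemma choose_two_pow_sub_one_odd : ∀ k a : ℕ, a < 2 ^ k → (2 ^ k - 1).choose a % 2 = 1 := by
  intro k
  induction k with
  | zero =>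
    intro a ha
    interval_cases a
    simp
  | succ k ih =>
    intro a ha
    have : Fact (Nat.Prime 2) := ⟨Nat.prime_two⟩
    have hpow : (1:ℕ) ≤ 2 ^ k := Nat.one_le_two_pow
    have hps : 2 ^ (k+1) = 2 * 2 ^ k := by ring
    have h := Choose.choose_modEq_choose_mod_mul_choose_div_nat
      (p := 2) (n := 2 ^ (k+1) - 1) (k := a)
    have h1 : (2 ^ (k+1) - 1) % 2 = 1 := by omega
    have h2 : (2 ^ (k+1) - 1) / 2 = 2 ^ k - 1 := by omega
    have h3 : Nat.choose 1 (a % 2) = 1 := by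
      have : a % 2 = 0 ∨ a % 2 = 1 := by omega
      rcases this with h' | h' <;> simp [h']
    have h4 : a / 2 < 2 ^ k := by omega
    have h5 := ih (a / 2) h4
    rw [h1, h2, h3, one_mul] at h
    rw [Nat.ModEq] at h
    omega

/-- If `n` is not a power of 2 and `b = 2^k` is the largest power of 2 below `n`,
`a = n - b`, then `a < 2b`, the `c = 0` Adem coefficient `C(b-1, a)` is odd,
and (in any `𝔽₂`-algebra with elements `Sq` satisfying the Adem relations and `Sq⁰ = 1`)
`Sqⁿ` is a sum of composites `Sqⁱ Sqʲ` with `0 < i, j < n`. -/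
theorem sq_decomposable_of_not_pow_two
    {A : Type*} [Ring A] [Algebra (ZMod 2) A]
    (Sq : ℕ → A)
    (hSq0 : Sq 0 = 1)
    (adem : ∀ a b : ℕ, 0 < a → a < 2 * b →
      Sq a * Sq b = ∑ c ∈ Finset.range (a / 2 + 1),
        (Nat.choose (b - c - 1) (a - 2 * c) : ZMod 2) • (Sq (a + b - c) * Sq c))
    (n k : ℕ) (hn : ¬ ∃ m, n = 2 ^ m) (hlt : 2 ^ k < n) (hle : n < 2 ^ (k + 1)) :
    n - 2 ^ k < 2 * 2 ^ k ∧
    Nat.choose (2 ^ k - 1) (n - 2 ^ k) % 2 = 1 ∧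
    Sq n ∈ Submodule.span (ZMod 2)
      {x : A | ∃ i j : ℕ, 0 < i ∧ i < n ∧ 0 < j ∧ j < n ∧ x = Sq i * Sq j} := by
  set b := 2 ^ k with hb
  set a := n - b with ha
  have hps : 2 ^ (k+1) = 2 * b := by rw [hb]; ring
  have hpow : (1:ℕ) ≤ b := Nat.one_le_two_pow
  have hab : a < b := by omega
  have ha0 : 0 < a := by omega
  have hn' : a + b = n := by omega
  refine ⟨by omega, choose_two_pow_sub_one_odd k a (by omega), ?_⟩
  have hcoef : ((Nat.choose (b - 1) a : ℕ) : ZMod 2) = 1 := by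
    have := choose_two_pow_sub_one_odd k a (by omega)
    calc ((Nat.choose (b - 1) a : ℕ) : ZMod 2)
        = ((Nat.choose (b - 1) a % 2 : ℕ) : ZMod 2) := (ZMod.natCast_mod _ 2).symm
      _ = 1 := by rw [this]; norm_num
  have hA := adem a b ha0 (by omega)
  rw [Finset.sum_range_succ'] at hA
  simp only [Nat.sub_zero, Nat.mul_zero, Nat.add_sub_cancel] at hA
  rw [hcoef, hSq0, mul_one, one_smul, hn'] at hA
  have key : Sq n = Sq a * Sq b -
      ∑ c ∈ Finset.range (a / 2),
        (Nat.choose (b - (c + 1) - 1) (a - 2 * (c + 1)) : ZMod 2) •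
          (Sq (n - (c + 1)) * Sq (c + 1)) := by
    rw [eq_sub_iff_add_eq, add_comm]
    exact hA.symm
  rw [key]
  apply Submodule.sub_mem
  · exact Submodule.subset_span ⟨a, b, ha0, by omega, by omega, by omega, rfl⟩
  · apply Submodule.sum_mem
    intro c hc
    rw [Finset.mem_range] at hc
    apply Submodule.smul_mem
    exact Submodule.subset_span ⟨n - (c + 1), c + 1, by omega, by omega, by omega, by omega, rfl⟩
end

section
/- Let P_k = 𝔽₂[t₁,…,t_k] with the Steenrod action determined by Sq^s(t^m) = C(m, s) t^{m+s} on powers of a degree-1 generator t and the Cartan formula. Define the Kameko map φ : P_k → P_k on monomials by φ(x) = y if x = (t₁t₂⋯t_k)·y² and φ(x) = 0 otherwise, extended linearly. Then for every nonnegative integer h, φ ∘ Sq^{2h} = Sq^h ∘ φ and φ ∘ Sq^{2h+1} = 0 as maps P_k → P_k. -/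
/-!
Write a monomial as `t^a = (∏_{i ∈ E} tᵢ) · w²`, where `E` is the set of odd exponents. Since `φ`
only sees the parity pattern of the exponents, `φ(x · v²) = φ(x) · v` for all `x`, `v`. In
characteristic 2 the Cartan formula gives `Sq^n(w²) = (Sq^{n/2} w)²` for even `n` and `0` for odd
`n`, and `Sq^p(∏_{i ∈ E} tᵢ)` is the sum of `∏_{i ∈ E} tᵢ · ∏_{i ∈ T} tᵢ` over the `p`-subsets
`T ⊆ E`. For `p > 0` every such term contains a squared variable, so `φ` kills it. Hence
`φ(Sq^n(t^a)) = φ(∏_{i ∈ E} tᵢ) · Sq^{n/2} w = Sq^{n/2}(φ(t^a))` for even `n`, and `0` for odd `n`.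
-/

open MvPolynomial Finset

namespace CharTwo

variable {A : Type*} [CommRing A] [CharP A 2]

theorem sum_antidiagonal_mul (f : ℕ → A) (n : ℕ) :
    ∑ p ∈ antidiagonal n, f p.1 * f p.2 = if Even n then f (n / 2) ^ 2 else 0 := by
  have cancel (s : Finset (ℕ × ℕ)) (hswap : ∀ p ∈ s, p.swap ∈ s) (hdiag : ∀ p ∈ s, p.1 ≠ p.2) :
      ∑ p ∈ s, f p.1 * f p.2 = 0 :=
    sum_involution (fun p _ => p.swap)
      (fun p _ => by rw [Prod.fst_swap, Prod.snd_swap, mul_comm, add_self_eq_zero])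
      (fun p hp _ h => hdiag p hp (congrArg Prod.snd h))
      hswap (fun p _ => p.swap_swap)
  split_ifs with hn
  · obtain ⟨m, rfl⟩ := hn
    have hmem : (m, m) ∈ antidiagonal (m + m) := HasAntidiagonal.mem_antidiagonal.mpr rfl
    rw [← add_sum_erase _ _ hmem, cancel, add_zero, ← two_mul,
      Nat.mul_div_cancel_left m two_pos, sq]
    all_goals
      intro p hp
      simp only [mem_erase, HasAntidiagonal.mem_antidiagonal, ne_eq, Prod.ext_iff,
        Prod.fst_swap, Prod.snd_swap] at hp ⊢
      omega
  · refine cancel _ (fun p hp => ?_) (fun p hp h => hn ⟨p.1, ?_⟩) <;>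
      simp only [HasAntidiagonal.mem_antidiagonal, Prod.fst_swap, Prod.snd_swap] at * <;> omega

end CharTwo

namespace SteenrodSquare

variable {A : Type*} [CommRing A] {Sq : ℕ → A → A}
  (hCartan : ∀ n u v, Sq n (u * v) = ∑ p ∈ antidiagonal n, Sq p.1 u * Sq p.2 v)
include hCartan

theorem apply_pow_two [CharP A 2] (u : A) (n : ℕ) :
    Sq n (u ^ 2) = if Even n then Sq (n / 2) u ^ 2 else 0 := by
  rw [sq u, hCartan, CharTwo.sum_antidiagonal_mul (fun i => Sq i u)]

variable (hSq0 : ∀ v, Sq 0 v = v)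
include hSq0

theorem apply_succ_mul_of_deg_one {x : A} (hx1 : Sq 1 x = x ^ 2)
    (hx : ∀ s, 1 < s → Sq s x = 0) (v : A) (p : ℕ) :
    Sq (p + 1) (x * v) = x * Sq (p + 1) v + x ^ 2 * Sq p v := by
  rw [hCartan, Nat.sum_antidiagonal_succ, sum_eq_single (0, p)]
  · rw [hSq0, hx1]
  · intro q _ hq
    rw [HasAntidiagonal.mem_antidiagonal] at *
    rw [hx _ (by grind), zero_mul]
  · simp

theorem apply_prod_of_deg_one (hSq1 : ∀ s, 0 < s → Sq s 1 = 0) {ι : Type*} [DecidableEq ι]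
    {x : ι → A} (hx1 : ∀ i, Sq 1 (x i) = x i ^ 2) (hx : ∀ s i, 1 < s → Sq s (x i) = 0)
    (E : Finset ι) (p : ℕ) :
    Sq p (∏ i ∈ E, x i) = (∏ i ∈ E, x i) * ∑ T ∈ E.powersetCard p, ∏ i ∈ T, x i := by
  induction E using Finset.induction_on generalizing p with
  | empty => cases p with
    | zero => simp [hSq0]
    | succ p =>
      rw [prod_empty, hSq1 _ p.succ_pos, powersetCard_eq_empty.mpr (by simp), sum_empty,
        mul_zero]
  | insert j E hj ih => cases p with
    | zero => simp [hSq0]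
    | succ p =>
      have hjT {T} (hT : T ∈ E.powersetCard p) : j ∉ T :=
        fun h => hj ((mem_powersetCard.mp hT).1 h)
      have hdisj : Disjoint (E.powersetCard (p + 1)) ((E.powersetCard p).image (insert j)) := by
        simp only [disjoint_left, mem_image, not_exists, not_and]
        rintro _ hT S - rfl
        exact hj ((mem_powersetCard.mp hT).1 (mem_insert_self j S))
      have hinj : Set.InjOn (insert j) (E.powersetCard p : Set (Finset ι)) :=
        fun S hS T hT hST => by rw [← erase_insert (hjT hS), ← erase_insert (hjT hT), hST]
      rw [prod_insert hj, apply_succ_mul_of_deg_one hCartan hSq0 (hx1 j) (hx · j), ih, ih,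
        powersetCard_succ_insert hj, sum_union hdisj, sum_image hinj,
        sum_congr rfl fun T hT => prod_insert (hjT hT), ← mul_sum]
      ring

end SteenrodSquare

theorem MvPolynomial.prod_X_eq_monomial {σ R : Type*} [CommSemiring R] [DecidableEq σ]
    (S : Finset σ) :
    ∏ i ∈ S, (X i : MvPolynomial σ R) = monomial (∑ i ∈ S, Finsupp.single i 1) 1 := by
  rw [monomial_sum_one]; rfl

theorem MvPolynomial.monomial_eq_prod_X_mul_sq {σ R : Type*} [Fintype σ] [DecidableEq σ]
    [CommSemiring R] (a : σ →₀ ℕ) :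
    monomial a (1 : R) = (∏ i ∈ univ.filter (fun i => Odd (a i)), X i) *
      monomial (Finsupp.equivFunOnFinite.symm fun i => a i / 2) 1 ^ 2 := by
  rw [prod_X_eq_monomial, monomial_pow, monomial_mul, one_pow, one_mul]
  refine congrArg (monomial · 1) (Finsupp.ext fun i => ?_)
  have hdiv := Nat.mod_add_div (a i) 2
  simp only [Finsupp.add_apply, Finsupp.finsetSum_apply, Finsupp.single_apply, sum_ite_eq',
    mem_filter, mem_univ, true_and, Finsupp.smul_apply, smul_eq_mul,
    Finsupp.coe_equivFunOnFinite_symm, Nat.odd_iff]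
  split_ifs <;> omega

namespace Kameko

-- Any decidability instance, so that these lemmas match the `if` of `hφ` however it elaborated.
variable {σ : Type*} [Fintype σ] [∀ a : σ →₀ ℕ, Decidable (∀ i, Odd (a i))]
  {φ : MvPolynomial σ (ZMod 2) →ₗ[ZMod 2] MvPolynomial σ (ZMod 2)}
  (hφ : ∀ a : σ →₀ ℕ, φ (monomial a 1) =
    if ∀ i, Odd (a i) then monomial (Finsupp.equivFunOnFinite.symm fun i => (a i - 1) / 2) 1
    else 0)
include hφ

theorem map_monomial (a : σ →₀ ℕ) (c : ZMod 2) :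
    φ (monomial a c) =
      if ∀ i, Odd (a i) then monomial (Finsupp.equivFunOnFinite.symm fun i => (a i - 1) / 2) c
      else 0 := by
  rw [← mul_one c, ← smul_eq_mul, ← smul_monomial, map_smul, hφ]
  split_ifs <;> simp [smul_monomial]

theorem map_mul_sq (x v : MvPolynomial σ (ZMod 2)) : φ (x * v ^ 2) = φ x * v := by
  induction x using MvPolynomial.induction_on' with
  | add x y hx hy => rw [add_mul, map_add, hx, hy, map_add, add_mul]
  | monomial a c =>
    induction v using MvPolynomial.induction_on' with
    | add v w hv hw => rw [CharTwo.add_sq, mul_add, map_add, hv, hw, mul_add]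
    | monomial d e =>
      have hodd : (∀ i, Odd ((a + 2 • d) i)) ↔ ∀ i, Odd (a i) := by simp [Nat.odd_add]
      rw [monomial_pow, monomial_mul, ZMod.pow_card, map_monomial hφ, map_monomial hφ,
        if_congr hodd rfl rfl]
      split_ifs with h
      · rw [monomial_mul]
        refine congrArg (monomial · (c * e)) (Finsupp.ext fun i => ?_)
        have hai := Nat.odd_iff.mp (h i)
        simp only [Finsupp.coe_equivFunOnFinite_symm, Finsupp.add_apply,
          Finsupp.smul_apply, smul_eq_mul]
        omega
      · rw [zero_mul]

theorem map_prod_X [DecidableEq σ] (S : Finset σ) :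
    φ (∏ i ∈ S, X i) = if S = univ then 1 else 0 := by
  have hexp (j : σ) : (∑ i ∈ S, Finsupp.single i 1) j = if j ∈ S then 1 else 0 := by
    simp [Finsupp.finsetSum_apply, Finsupp.single_apply]
  have hodd (j : σ) : Odd (if j ∈ S then 1 else 0) ↔ j ∈ S := by split_ifs with h <;> simp [h]
  simp only [prod_X_eq_monomial, hφ, hexp, hodd, eq_univ_iff_forall]
  split_ifs with h
  · have hzero :
        (Finsupp.equivFunOnFinite.symm fun i => ((if i ∈ S then 1 else 0) - 1) / 2) = 0 :=
      Finsupp.ext fun i => by simp [h i]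
    rw [hzero, monomial_zero', C_1]
  · rfl

section Steenrod

variable [DecidableEq σ] {Sq : ℕ → MvPolynomial σ (ZMod 2) → MvPolynomial σ (ZMod 2)}
  (hCartan : ∀ n u v, Sq n (u * v) = ∑ p ∈ antidiagonal n, Sq p.1 u * Sq p.2 v)
  (hSq0 : ∀ v, Sq 0 v = v) (hSq1 : ∀ s, 0 < s → Sq s 1 = 0)
  (hX1 : ∀ i, Sq 1 (X i) = X i ^ 2) (hXgt : ∀ s i, 1 < s → Sq s (X i) = 0)
include hCartan hSq0 hSq1 hX1 hXgt

theorem map_steenrod_prod_X (E : Finset σ) (n : ℕ) :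
    φ (Sq n (∏ i ∈ E, X i)) = if n = 0 then φ (∏ i ∈ E, X i) else 0 := by
  cases n with
  | zero => rw [hSq0, if_pos rfl]
  | succ n =>
    rw [SteenrodSquare.apply_prod_of_deg_one hCartan hSq0 hSq1 hX1 hXgt, mul_sum, map_sum,
      if_neg n.succ_ne_zero]
    refine sum_eq_zero fun T hT => ?_
    obtain ⟨hTE, hcard⟩ := mem_powersetCard.mp hT
    obtain ⟨j, hj⟩ : T.Nonempty := card_pos.mp (by omega)
    -- `E ∖ T` misses `j`, so `φ` kills `∏_{E ∖ T} X`
    rw [← prod_sdiff hTE, mul_assoc, ← sq, map_mul_sq hφ, map_prod_X hφ, if_neg, zero_mul]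
    exact fun h => (mem_sdiff.mp (h ▸ mem_univ j)).2 hj

theorem map_steenrod_prod_X_mul_sq (E : Finset σ) (w : MvPolynomial σ (ZMod 2)) (n : ℕ) :
    φ (Sq n ((∏ i ∈ E, X i) * w ^ 2)) =
      if Even n then φ (∏ i ∈ E, X i) * Sq (n / 2) w else 0 := by
  rw [hCartan, map_sum, sum_eq_single (0, n)]
  · rw [SteenrodSquare.apply_pow_two hCartan]
    split_ifs
    · rw [map_mul_sq hφ, map_steenrod_prod_X hφ hCartan hSq0 hSq1 hX1 hXgt, if_pos rfl]
    · rw [mul_zero, map_zero]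
  · intro p hp hne
    have hp1 : p.1 ≠ 0 := by
      rw [HasAntidiagonal.mem_antidiagonal] at hp
      exact fun h => hne (Prod.ext h (by omega))
    rw [SteenrodSquare.apply_pow_two hCartan]
    split_ifs
    · rw [map_mul_sq hφ, map_steenrod_prod_X hφ hCartan hSq0 hSq1 hX1 hXgt, if_neg hp1, zero_mul]
    · rw [mul_zero, map_zero]
  · simp

end Steenrod

end Kameko

open scoped Classical in
/-- The Kameko map `φ` (sending `t₁^{a₁}⋯t_k^{a_k}` to `t₁^{(a₁-1)/2}⋯t_k^{(a_k-1)/2}`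
if all exponents are odd, and to `0` otherwise) satisfies
`φ ∘ Sq^{2h} = Sq^h ∘ φ` and `φ ∘ Sq^{2h+1} = 0`. -/
theorem kameko_map_commutes (k h : ℕ)
    (Sq : ℕ → MvPolynomial (Fin k) (ZMod 2) →ₗ[ZMod 2] MvPolynomial (Fin k) (ZMod 2))
    (hSq0 : Sq 0 = LinearMap.id)
    (hone : ∀ s, 0 < s → Sq s 1 = 0)
    (hX1 : ∀ i, Sq 1 (X i) = X i ^ 2)
    (hXgt : ∀ s i, 1 < s → Sq s (X i) = 0)
    (hCartan : ∀ (n : ℕ) (u v : MvPolynomial (Fin k) (ZMod 2)),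
      Sq n (u * v) = ∑ p ∈ Finset.HasAntidiagonal.antidiagonal n, Sq p.1 u * Sq p.2 v)
    (φ : MvPolynomial (Fin k) (ZMod 2) →ₗ[ZMod 2] MvPolynomial (Fin k) (ZMod 2))
    (hφ : ∀ a : Fin k →₀ ℕ,
      φ (monomial a 1) =
        if ∀ i, Odd (a i) then
          monomial (Finsupp.equivFunOnFinite.symm fun i => (a i - 1) / 2) 1
        else 0) :
    φ ∘ₗ Sq (2 * h) = Sq h ∘ₗ φ ∧ φ ∘ₗ Sq (2 * h + 1) = 0 := by
  have hSq0' (v : MvPolynomial (Fin k) (ZMod 2)) : Sq 0 v = v := by rw [hSq0, LinearMap.id_apply]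
  have key (a : Fin k →₀ ℕ) (n : ℕ) :
      φ (Sq n (monomial a 1)) = if Even n then Sq (n / 2) (φ (monomial a 1)) else 0 := by
    rw [monomial_eq_prod_X_mul_sq,
      Kameko.map_steenrod_prod_X_mul_sq hφ hCartan hSq0' hone hX1 hXgt, Kameko.map_mul_sq hφ,
      Kameko.map_prod_X hφ]
    split_ifs <;> simp
  refine ⟨linearMap_ext fun a => LinearMap.ext_ring ?_,
    linearMap_ext fun a => LinearMap.ext_ring ?_⟩
  · simpa using key a (2 * h)
  · simpa using key a (2 * h + 1)
end

section
/- In the mod-2 lambda algebra Λ with generators λ_n (n ≥ 0) subject to the Adem relations λ_i λ_{2i+n+1} = Σ_{j≥0} C(n−j−1, j) λ_{i+n−j} λ_{2i+1+j}, the endomorphism Sq⁰ defined on monomials by Sq⁰(λ_{j₁}⋯λ_{j_k}) = λ_{2j₁+1}⋯λ_{2j_k+1} respects the Adem relations, i.e. applying Sq⁰ to both sides of each relation yields a valid consequence of the relations. -/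
open FreeAlgebra

/-- Generator `λ_n` of the (free algebra presenting the) mod-2 lambda algebra. -/
noncomputable def lam (n : ℕ) : FreeAlgebra (ZMod 2) ℕ := FreeAlgebra.ι (ZMod 2) n

/-- Left-hand side of the Adem relation `λ_i λ_{2i+n+1}`. -/
noncomputable def ademLHS (i n : ℕ) : FreeAlgebra (ZMod 2) ℕ := lam i * lam (2 * i + n + 1)

/-- Right-hand side of the Adem relation `Σ_j C(n-j-1, j) λ_{i+n-j} λ_{2i+1+j}`
(the coefficient vanishes for `j ≥ n`). -/
noncomputable def ademRHS (i n : ℕ) : FreeAlgebra (ZMod 2) ℕ :=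
  ∑ j ∈ Finset.range n,
    (Nat.choose (n - j - 1) j : ZMod 2) • (lam (i + n - j) * lam (2 * i + 1 + j))

/-- The relations of the mod-2 lambda algebra `Λ`. -/
def lambdaRel (x y : FreeAlgebra (ZMod 2) ℕ) : Prop :=
  ∃ i n : ℕ, x = ademLHS i n ∧ y = ademRHS i n

/-- `Sq⁰` on the free algebra: `λ_j ↦ λ_{2j+1}` multiplicatively. -/
noncomputable def sqZero : FreeAlgebra (ZMod 2) ℕ →ₐ[ZMod 2] FreeAlgebra (ZMod 2) ℕ :=
  FreeAlgebra.lift (ZMod 2) fun n => FreeAlgebra.ι (ZMod 2) (2 * n + 1)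

lemma sqZero_lam (k : ℕ) : sqZero (lam k) = lam (2 * k + 1) :=
  FreeAlgebra.lift_ι_apply _ _

lemma choose_cast_two (a b : ℕ) :
    ((Nat.choose a b : ℕ) : ZMod 2)
      = ((Nat.choose (a % 2) (b % 2) * Nat.choose (a / 2) (b / 2) : ℕ) : ZMod 2) :=
  (ZMod.natCast_eq_natCast_iff _ _ _).mpr
    (Choose.choose_modEq_choose_mod_mul_choose_div_nat (p := 2))

lemma choose_even_odd (a b : ℕ) :
    ((Nat.choose (2 * a) (2 * b + 1) : ℕ) : ZMod 2) = 0 := by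
  rw [choose_cast_two]
  have h1 : (2 * a) % 2 = 0 := by omega
  have h2 : (2 * b + 1) % 2 = 1 := by omega
  rw [h1, h2]
  simp

lemma choose_odd_even (a b : ℕ) :
    ((Nat.choose (2 * a + 1) (2 * b) : ℕ) : ZMod 2)
      = ((Nat.choose a b : ℕ) : ZMod 2) := by
  rw [choose_cast_two]
  have h1 : (2 * a + 1) % 2 = 1 := by omega
  have h2 : (2 * b) % 2 = 0 := by omega
  have h3 : (2 * a + 1) / 2 = a := by omega
  have h4 : (2 * b) / 2 = b := by omega
  rw [h1, h2, h3, h4]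
  simp

lemma sum_range_two_mul {M : Type*} [AddCommMonoid M] (f : ℕ → M) (n : ℕ) :
    ∑ j ∈ Finset.range (2 * n), f j
      = ∑ m ∈ Finset.range n, (f (2 * m) + f (2 * m + 1)) := by
  induction n with
  | zero => simp
  | succ n ih =>
    have : 2 * (n + 1) = (2 * n + 1) + 1 := by ring
    rw [this, Finset.sum_range_succ, Finset.sum_range_succ, ih, Finset.sum_range_succ]
    abel

/-- `Sq⁰` respects the Adem relations of the lambda algebra: applying it to both
sides of each relation yields elements that are equal in `Λ = FreeAlgebra / relations`. -/
theorem sqZero_respects_adem (i n : ℕ) :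
    RingQuot.mkAlgHom (ZMod 2) lambdaRel (sqZero (ademLHS i n))
      = RingQuot.mkAlgHom (ZMod 2) lambdaRel (sqZero (ademRHS i n)) := by
  have h1 : sqZero (ademLHS i n) = ademLHS (2 * i + 1) (2 * n) := by
    rw [ademLHS, map_mul, sqZero_lam, sqZero_lam, ademLHS]
    congr 2
    omega
  have h2 : sqZero (ademRHS i n) = ademRHS (2 * i + 1) (2 * n) := by
    rw [ademRHS, map_sum, ademRHS,
      sum_range_two_mul (fun j => (Nat.choose (2 * n - j - 1) j : ZMod 2) •
        (lam (2 * i + 1 + 2 * n - j) * lam (2 * (2 * i + 1) + 1 + j)))]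
    refine Finset.sum_congr rfl fun m hm => ?_
    rw [Finset.mem_range] at hm
    have hodd : ((Nat.choose (2 * n - (2 * m + 1) - 1) (2 * m + 1) : ℕ) : ZMod 2) = 0 := by
      have : 2 * n - (2 * m + 1) - 1 = 2 * (n - m - 1) := by omega
      rw [this, choose_even_odd]
    rw [hodd, zero_smul, add_zero]
    have hcoef : ((Nat.choose (2 * n - 2 * m - 1) (2 * m) : ℕ) : ZMod 2)
        = ((Nat.choose (n - m - 1) m : ℕ) : ZMod 2) := by
      have : 2 * n - 2 * m - 1 = 2 * (n - m - 1) + 1 := by omega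
      rw [this, choose_odd_even]
    rw [map_smul, map_mul, sqZero_lam, sqZero_lam, hcoef]
    congr 3 <;> omega
  rw [h1, h2]
  exact RingQuot.mkAlgHom_rel (ZMod 2) ⟨2 * i + 1, 2 * n, rfl, rfl⟩
end

section
/- Let n_{r,s,u} = 2^{r+s+u} + 2^{r+s} + 2^r − 3 for positive integers r, s, u. Then μ(n_{r,s,u}) = 3, where μ(n) = min{h : α(n+h) ≤ h} and α is the binary digit-sum. Equivalently, n_{r,s,u} = (2^{r+s+u} − 1) + (2^{r+s} − 1) + (2^r − 1) with r+s+u > r+s > r > 0. -/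
lemma alpha_add_pow {m a : ℕ} (h : m < 2 ^ a) : alpha (m + 2 ^ a) = alpha m + 1 := by
  have hlen : (Nat.digits 2 m).length ≤ a := by
    rcases Nat.eq_zero_or_pos m with rfl | hm
    · simp
    · rw [Nat.digits_len 2 m one_lt_two hm.ne']
      have : Nat.log 2 m < a := Nat.log_lt_of_lt_pow hm.ne' h
      omega
  have := Nat.digits_append_zeroes_append_digits (b := 2) (k := a - (Nat.digits 2 m).length)
    (m := 1) (n := m) one_lt_two one_pos
  rw [Nat.add_sub_cancel' hlen] at this
  unfold alpha
  rw [show m + 2 ^ a = m + 2 ^ a * 1 by ring, ← this]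
  simp [List.sum_replicate, add_comm]

lemma alpha_pow_sub_one (r : ℕ) : alpha (2 ^ r - 1) = r := by
  induction r with
  | zero => simp [alpha]
  | succ k ih =>
    have h : 2 ^ k - 1 < 2 ^ k := by
      have := Nat.one_le_two_pow (n := k); omega
    have e : 2 ^ (k + 1) - 1 = (2 ^ k - 1) + 2 ^ k := by
      have := Nat.one_le_two_pow (n := k); rw [pow_succ]; omega
    rw [e, alpha_add_pow h, ih]

theorem mu_n_rsu_eq_three (r s u : ℕ) (hr : 1 ≤ r) (hs : 1 ≤ s) (hu : 1 ≤ u) :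
    mu (2 ^ (r + s + u) + 2 ^ (r + s) + 2 ^ r - 3) = 3 ∧
    2 ^ (r + s + u) + 2 ^ (r + s) + 2 ^ r - 3
      = (2 ^ (r + s + u) - 1) + (2 ^ (r + s) - 1) + (2 ^ r - 1) ∧
    r < r + s ∧ r + s < r + s + u := by
  have hA : 2 ≤ 2 ^ r := by
    calc 2 = 2 ^ 1 := rfl
    _ ≤ 2 ^ r := Nat.pow_le_pow_right (by norm_num) hr
  have hAB : 2 * 2 ^ r ≤ 2 ^ (r + s) := by
    calc 2 * 2 ^ r = 2 ^ (r + 1) := by ring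
    _ ≤ 2 ^ (r + s) := Nat.pow_le_pow_right (by norm_num) (by omega)
  have hBC : 2 * 2 ^ (r + s) ≤ 2 ^ (r + s + u) := by
    calc 2 * 2 ^ (r + s) = 2 ^ (r + s + 1) := by ring
    _ ≤ 2 ^ (r + s + u) := Nat.pow_le_pow_right (by norm_num) (by omega)
  set n := 2 ^ (r + s + u) + 2 ^ (r + s) + 2 ^ r - 3 with hn
  refine ⟨?_, by omega, by omega, by omega⟩
  have a3 : alpha (n + 3) = 3 := by
    have e : n + 3 = ((0 + 2 ^ r) + 2 ^ (r + s)) + 2 ^ (r + s + u) := by omega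
    rw [e, alpha_add_pow (by omega), alpha_add_pow (by omega),
      alpha_add_pow (by positivity)]
    simp [alpha]
  have a2 : alpha (n + 2) = r + 2 := by
    have e : n + 2 = ((2 ^ r - 1 + 2 ^ (r + s)) + 2 ^ (r + s + u)) := by omega
    rw [e, alpha_add_pow (by omega), alpha_add_pow (by omega), alpha_pow_sub_one]
  have a1 : 2 ≤ alpha (n + 1) := by
    have e : n + 1 = ((2 ^ r - 2 + 2 ^ (r + s)) + 2 ^ (r + s + u)) := by omega
    rw [e, alpha_add_pow (by omega), alpha_add_pow (by omega)]
    omega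
  have a0 : 1 ≤ alpha (n + 0) := by
    have e : n + 0 = (2 ^ (r + s) + 2 ^ r - 3) + 2 ^ (r + s + u) := by omega
    rw [e, alpha_add_pow (by omega)]
    omega
  have mem3 : (3 : ℕ) ∈ {h : ℕ | alpha (n + h) ≤ h} := by
    simp only [Set.mem_setOf_eq, a3]; exact le_refl 3
  refine le_antisymm (Nat.sInf_le mem3) (le_csInf ⟨3, mem3⟩ ?_)
  intro m hm
  simp only [Set.mem_setOf_eq] at hm
  by_contra hlt
  interval_cases m <;> omega
end
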